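/- Let c, d be small categories and let F : (d ⥤ Type) ⥤ (c ⥤ Type) be a familial functor (naturally isomorphic to X ↦ (C ↦ Σ_{I ∈ F(1)(C)} Hom_{d ⥤ Type}(F[I], X)) for some positions copresheaf F(1) and arities F[I]). Then F preserves all limits of shapes given by small connected categories; in particular, F preserves pullbacks, equalizers, and wide pullbacks. -/

import Mathlib

/-!
Evaluated at `C`, a familial functor is the coproduct `X ↦ Σ I, Hom(F[I], X)` of
corepresentables, and limits in `c ⥤ Type` are computed pointwise. Corepresentables preserve all
limits, and over a connected shape a compatible family of elements of such a coproduct has the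
same index `I` at every object, hence is a cone from the single arity `F[I]`.
-/
namespace Fam
open CategoryTheory Opposite Limits
private lemma sigmaExt {α : Type} {β : α → Type} {a a' : α} {b : β a} {b' : β a'}
    (h : a = a') (h' : HEq b b') : (⟨a, b⟩ : Σ x, β x) = ⟨a', b'⟩ := by
  subst h; cases h'; rfl
variable {c d : Type} [SmallCategory c] [SmallCategory d]
def elHom (pos : c ⥤ Type) {C C' : c} (f : C ⟶ C') (I : pos.obj C) :
    pos.elementsMk C I ⟶ pos.elementsMk C' (pos.map f I) :=
  CategoryOfElements.homMk _ _ f rfl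
lemma eqToHom_val {pos : c ⥤ Type} {x y : pos.Elements} (E : x = y) :
    (eqToHom E).val = eqToHom (congrArg Sigma.fst E) := by
  subst E; simp
@[simps]
def famApply (pos : c ⥤ Type) (ar : pos.Elementsᵒᵖ ⥤ d ⥤ Type) :
    (d ⥤ Type) ⥤ c ⥤ Type where
  obj X :=
    { obj := fun C => Σ I : pos.obj C, ar.obj (op (pos.elementsMk C I)) ⟶ X
      map := fun {C C'} f => TypeCat.ofHom fun x => ⟨pos.map f x.1, ar.map (elHom pos f x.1).op ≫ x.2⟩
      map_id := by
        intro C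
        apply ConcreteCategory.hom_ext
        intro x
        obtain ⟨I, g⟩ := x
        have h : pos.map (𝟙 C) I = I := by simp
        have hE : pos.elementsMk C I = pos.elementsMk C (pos.map (𝟙 C) I) := by rw [h]
        have he : elHom pos (𝟙 C) I = eqToHom hE := by
          apply CategoryOfElements.ext
          rw [eqToHom_val]
          simp [elHom]
        dsimp
        refine sigmaExt h ?_
        rw [he]
        simp [eqToHom_op, eqToHom_map]
      map_comp := by
        intro C C' C'' f g
        apply ConcreteCategory.hom_ext
        intro x
        obtain ⟨I, u⟩ := x
        have h : pos.map (f ≫ g) I = pos.map g (pos.map f I) := by simp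
        have hE : pos.elementsMk C'' (pos.map (f ≫ g) I)
            = pos.elementsMk C'' (pos.map g (pos.map f I)) := by rw [h]
        have hcomp : elHom pos f I ≫ elHom pos g (pos.map f I)
            = elHom pos (f ≫ g) I ≫ eqToHom hE := by
          apply CategoryOfElements.ext
          rw [CategoryOfElements.comp_val, CategoryOfElements.comp_val, eqToHom_val]
          simp [elHom]
        dsimp
        refine sigmaExt h ?_
        rw [← Category.assoc, ← ar.map_comp, ← op_comp, hcomp, op_comp, ar.map_comp,
          Category.assoc]
        simp [eqToHom_op, eqToHom_map] }
  map {X Y} t :=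
    { app := fun C => TypeCat.ofHom fun x => ⟨x.1, x.2 ≫ t⟩
      naturality := by
        intro C C' f
        apply ConcreteCategory.hom_ext
        intro x
        dsimp
        rw [Category.assoc] }
  map_id := by
    intro X
    apply NatTrans.ext
    funext C
    apply ConcreteCategory.hom_ext
    intro x
    simp
  map_comp := by
    intro X Y Z s t
    apply NatTrans.ext
    funext C
    apply ConcreteCategory.hom_ext
    intro x
    simp

/-- The unit exhibiting `famApply pos (ar ⋙ G)` as the right coclosure `⌈F/G⌉`,
i.e. the left Kan extension of the familial functor `F = famApply pos ar` along `G`. -/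
def coclosureUnit {e : Type} [SmallCategory e] (pos : c ⥤ Type)
    (ar : pos.Elementsᵒᵖ ⥤ e ⥤ Type) (G : (e ⥤ Type) ⥤ d ⥤ Type) :
    famApply pos ar ⟶ G ⋙ famApply pos (ar ⋙ G) where
  app X :=
    { app := fun C => TypeCat.ofHom fun x => ⟨x.1, G.map x.2⟩
      naturality := by
        intro C C' f
        apply ConcreteCategory.hom_ext
        intro x
        show (⟨pos.map f x.1, G.map (ar.map (elHom pos f x.1).op ≫ x.2)⟩ :
            Σ I : pos.obj C', (ar ⋙ G).obj (op (pos.elementsMk C' I)) ⟶ G.obj X)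
          = ⟨pos.map f x.1, G.map (ar.map (elHom pos f x.1).op) ≫ G.map x.2⟩
        rw [G.map_comp] }
  naturality := by
    intro X Y t
    apply NatTrans.ext
    funext C
    apply ConcreteCategory.hom_ext
    intro x
    show (⟨x.1, G.map (x.2 ≫ t)⟩ :
        Σ I : pos.obj C, (ar ⋙ G).obj (op (pos.elementsMk C I)) ⟶ G.obj Y)
      = ⟨x.1, G.map x.2 ≫ G.map t⟩
    rw [G.map_comp]

section SigmaCoyoneda

universe v u

variable {D : Type u} [Category.{v} D] {α : Type v} (A : α → D)

@[simps]
def sigmaCoyoneda : D ⥤ Type v where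
  obj X := Σ a, A a ⟶ X
  map t := TypeCat.ofHom fun x => ⟨x.1, x.2 ≫ t⟩

variable {A} {J : Type*} [Category* J] [IsConnected J] {K : J ⥤ D}

lemma exists_cone_of_mem_sections_sigmaCoyoneda {s : ∀ j, (K ⋙ sigmaCoyoneda A).obj j}
    (hs : s ∈ (K ⋙ sigmaCoyoneda A).sections) :
    ∃ (a : α) (f : (Functor.const J).obj (A a) ⟶ K), ∀ j, s j = ⟨a, f.app j⟩ := by
  obtain ⟨a, ha⟩ := constant_of_preserves_morphisms' (fun j => (s j).1)
    fun j j' g => congrArg Sigma.fst (hs g)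
  have hfiber : ∀ j, ∃ f : A a ⟶ K.obj j, s j = ⟨a, f⟩ := fun j => by
    rcases h : s j with ⟨b, f⟩
    obtain rfl : b = a := by simpa [h] using ha j
    exact ⟨f, rfl⟩
  choose f hf using hfiber
  refine ⟨a, { app := f, naturality := fun j j' g => ?_ }, hf⟩
  have hcomp : (⟨a, f j ≫ K.map g⟩ : Σ b, A b ⟶ K.obj j') = ⟨a, f j'⟩ := by
    rw [← hf, ← hs g, hf]
    rfl
  simpa using (sigma_mk_injective hcomp).symm

instance : PreservesLimitsOfShape J (sigmaCoyoneda A) where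
  preservesLimit {K} := ⟨fun {t} ht => (Types.isLimit_iff _).2 fun s hs => by
    obtain ⟨a, f, hf⟩ := exists_cone_of_mem_sections_sigmaCoyoneda hs
    refine ⟨⟨a, ht.lift ⟨A a, f⟩⟩, fun j => ?_, ?_⟩
    · rw [hf]
      exact congrArg (Sigma.mk a) (ht.fac ⟨A a, f⟩ j)
    · rintro ⟨b, g⟩ hg
      obtain rfl : a = b := (congrArg Sigma.fst ((hg (Classical.arbitrary J)).trans (hf _))).symm
      have hgf : ∀ j, g ≫ t.π.app j = f.app j := fun j =>
        sigma_mk_injective (β := fun b => A b ⟶ K.obj j) ((hg j).trans (hf j))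
      rw [ht.uniq ⟨A a, f⟩ g hgf]⟩

end SigmaCoyoneda

instance {J : Type*} [Category* J] [IsConnected J] (pos : c ⥤ Type)
    (ar : pos.Elementsᵒᵖ ⥤ d ⥤ Type) : PreservesLimitsOfShape J (famApply pos ar) :=
  preservesLimitsOfShape_of_evaluation _ J fun C =>
    inferInstanceAs <| PreservesLimitsOfShape J <|
      sigmaCoyoneda fun I : pos.obj C => ar.obj (op (pos.elementsMk C I))

/-- A familial functor `F : (d ⥤ Type) ⥤ (c ⥤ Type)` preserves all limits
of small connected shapes; in particular it preserves pullbacks, equalizers and wide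
pullbacks. -/
theorem familial_preserves_connected_limits
    {c d : Type} [SmallCategory c] [SmallCategory d]
    (F : (d ⥤ Type) ⥤ c ⥤ Type) (pos : c ⥤ Type)
    (ar : pos.Elementsᵒᵖ ⥤ d ⥤ Type) (e : famApply pos ar ≅ F) :
    (∀ (J : Type) [SmallCategory J] [IsConnected J],
      Nonempty (Limits.PreservesLimitsOfShape J F)) ∧
    Nonempty (Limits.PreservesLimitsOfShape Limits.WalkingCospan F) ∧
    Nonempty (Limits.PreservesLimitsOfShape Limits.WalkingParallelPair F) ∧
    (∀ ι : Type, Nonempty (Limits.PreservesLimitsOfShape (Limits.WidePullbackShape ι) F)) := by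
  have connected : ∀ (J : Type) [SmallCategory J] [IsConnected J],
      PreservesLimitsOfShape J F :=
    fun _ _ _ => preservesLimitsOfShape_of_natIso e
  exact ⟨fun J _ _ => ⟨connected J⟩, ⟨connected _⟩, ⟨connected _⟩, fun _ => ⟨connected _⟩⟩

end Fam
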